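/- arXiv:2210.04774 — 6 statements merged into one kernel-verified Lean document; each statement's English description precedes it below -/
import Mathlib

section
/- Let p ∈ (0,1), let m ≥ 1, 0 < r₂ ≤ r₁ be real numbers, and let n₁, n₂, s₁ be reals with 0 ≤ n₁ ≤ √m, 0 ≤ s₁ ≤ √m, n₂ ≥ 0 and n₁ + n₂ > 0. Set A = min{n₂, (m − ((1−p)/p)·s₁)⁺}, REW = A·r₂ + min{m − A, n₁}·r₁, and OPT = min{m, n₁}·r₁ + min{n₂, (m − n₁)⁺}·r₂. Then REW / OPT ≥ min{ max{0, 1 − (1−p)/(p·√m)}, 1 − √m·(r₁ − r₂)/(√m·r₁ + (m − √m)·r₂) }. -/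
/-- Deterministic core of the paper's Lemma 2 (region `R₁`, good event): the
reward of the protection-level policy with protection level `((1-p)/p)·s₁` for
type 1 on the ordered sequence, divided by the optimal clairvoyant reward, is
at least `min{(1 - (1-p)/(p√m))⁺, 1 - √m(r₁-r₂)/(√m r₁ + (m-√m) r₂)}`. -/
theorem region_one_good_event (p m r₁ r₂ n₁ n₂ s₁ A REW OPT : ℝ)
    (hp0 : 0 < p) (hp1 : p < 1) (hm : 1 ≤ m)
    (hr₂ : 0 < r₂) (hr : r₂ ≤ r₁)
    (hn₁0 : 0 ≤ n₁) (hn₁ : n₁ ≤ Real.sqrt m)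
    (hs₁0 : 0 ≤ s₁) (hs₁ : s₁ ≤ Real.sqrt m)
    (hn₂ : 0 ≤ n₂) (hsum : 0 < n₁ + n₂)
    (hA : A = min n₂ (max (m - (1 - p) / p * s₁) 0))
    (hREW : REW = A * r₂ + min (m - A) n₁ * r₁)
    (hOPT : OPT = min m n₁ * r₁ + min n₂ (max (m - n₁) 0) * r₂) :
    REW / OPT ≥
      min (max 0 (1 - (1 - p) / (p * Real.sqrt m)))
        (1 - Real.sqrt m * (r₁ - r₂) / (Real.sqrt m * r₁ + (m - Real.sqrt m) * r₂)) := by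
  have hm0 : (0:ℝ) ≤ m := by linarith
  set s := Real.sqrt m with hsdef
  have hs1 : 1 ≤ s := by
    rw [hsdef, show (1:ℝ) = Real.sqrt 1 by simp]
    exact Real.sqrt_le_sqrt hm
  have hs0 : 0 < s := by linarith
  have hss : s * s = m := Real.mul_self_sqrt hm0
  have hsm : s ≤ m := by nlinarith
  have hr1 : 0 < r₁ := lt_of_lt_of_le hr₂ hr
  set c := (1 - p) / p with hcdef
  have hc0 : 0 ≤ c := div_nonneg (by linarith) hp0.le
  have hcs : (1 - p) / (p * s) = c / s := by rw [hcdef, div_div]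
  set D := s * r₁ + (m - s) * r₂ with hDdef
  have hD : 0 < D := by
    have h1 : 0 < s * r₁ := mul_pos hs0 hr1
    have h2 : 0 ≤ (m - s) * r₂ := mul_nonneg (by linarith) hr₂.le
    rw [hDdef]; linarith
  have hterm2 : 1 - s * (r₁ - r₂) / D = m * r₂ / D := by
    field_simp
    ring
  set T1 := max 0 (1 - c / s) with hT1def
  set T2 := m * r₂ / D with hT2def
  rw [hcs, hterm2]
  have hT10 : 0 ≤ T1 := le_max_left _ _
  have hT20 : 0 ≤ T2 := div_nonneg (mul_nonneg hm0 hr₂.le) hD.le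
  have hT21 : T2 ≤ 1 := by
    rw [hT2def, div_le_one hD]
    have h1 : s * r₂ ≤ s * r₁ := mul_le_mul_of_nonneg_left hr hs0.le
    rw [hDdef]
    nlinarith [h1]
  -- simplify OPT
  have hmin1 : min m n₁ = n₁ := min_eq_right (le_trans hn₁ hsm)
  have hmax1 : max (m - n₁) 0 = m - n₁ := max_eq_left (by linarith [le_trans hn₁ hsm])
  set M := min n₂ (m - n₁) with hMdef
  have hM0 : 0 ≤ M := le_min hn₂ (by linarith [le_trans hn₁ hsm])
  have hMm : M ≤ m := le_trans (min_le_right _ _) (by linarith)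
  have hOPT' : OPT = n₁ * r₁ + M * r₂ := by rw [hOPT, hmin1, hmax1]
  have hOPTpos : 0 < OPT := by
    rw [hOPT']
    rcases lt_or_ge 0 n₁ with h | h
    · have h1 : 0 < n₁ * r₁ := mul_pos h hr1
      have h2 : 0 ≤ M * r₂ := mul_nonneg hM0 hr₂.le
      linarith
    · have hn₁z : n₁ = 0 := le_antisymm h hn₁0
      have hn₂pos : 0 < n₂ := by linarith
      have hMpos : 0 < M := by
        rw [hMdef, hn₁z, sub_zero]
        exact lt_min hn₂pos (by linarith)
      have h1 : 0 ≤ n₁ * r₁ := mul_nonneg hn₁0 hr1.le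
      have h2 : 0 < M * r₂ := mul_pos hMpos hr₂
      linarith
  have hA0 : 0 ≤ A := by
    rw [hA]
    exact le_min hn₂ (le_max_right _ _)
  have hAm : A ≤ m := by
    rw [hA]
    refine (min_le_right _ _).trans (max_le ?_ hm0)
    have := mul_nonneg hc0 hs₁0
    linarith
  rw [ge_iff_le, le_div_iff₀ hOPTpos]
  have hminT : min T1 T2 ≤ T2 := min_le_right _ _
  have hminT1 : min T1 T2 ≤ T1 := min_le_left _ _
  rcases le_total n₁ (m - A) with hcase | hcase
  · -- policy serves all n₁ type-1 agents
    have hREW' : REW = A * r₂ + n₁ * r₁ := by rw [hREW, min_eq_right hcase]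
    have hREW0 : 0 ≤ REW := by
      have h1 : 0 ≤ A * r₂ := mul_nonneg hA0 hr₂.le
      have h2 : 0 ≤ n₁ * r₁ := mul_nonneg hn₁0 hr1.le
      rw [hREW']; linarith
    rcases le_total n₂ (max (m - c * s₁) 0) with h | h
    · -- A = n₂ : REW ≥ OPT
      have hA' : A = n₂ := by rw [hA, min_eq_left h]
      have hMr : M * r₂ ≤ n₂ * r₂ :=
        mul_le_mul_of_nonneg_right (min_le_left _ _) hr₂.le
      have hOR : OPT ≤ REW := by rw [hOPT', hREW', hA']; linarith
      calc min T1 T2 * OPT ≤ 1 * OPT := by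
            apply mul_le_mul_of_nonneg_right _ hOPTpos.le
            exact le_trans hminT hT21
        _ ≤ REW := by linarith
    · have hA' : A = max (m - c * s₁) 0 := by rw [hA, min_eq_right h]
      rcases le_total (m - c * s₁) 0 with h2 | h2
      · -- here c ≥ s, so T1 = 0
        have hT1z : T1 = 0 := by
          rw [hT1def]
          apply max_eq_left
          rw [sub_nonpos, le_div_iff₀ hs0, one_mul]
          have h4 : c * s₁ ≤ c * s := mul_le_mul_of_nonneg_left hs₁ hc0
          have h5 : s * s ≤ c * s := by linarith [hss]
          exact le_of_mul_le_mul_right h5 hs0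
        have h5 : min T1 T2 ≤ 0 := hT1z ▸ hminT1
        have h6 : min T1 T2 * OPT ≤ 0 * OPT :=
          mul_le_mul_of_nonneg_right h5 hOPTpos.le
        rw [zero_mul] at h6
        linarith
      · have hA'' : A = m - c * s₁ := by rw [hA', max_eq_left h2]
        rcases le_total (1 - c / s) 0 with h3 | h3
        · have hT1z : T1 = 0 := max_eq_left h3
          have h5 : min T1 T2 ≤ 0 := hT1z ▸ hminT1
          have h6 : min T1 T2 * OPT ≤ 0 * OPT :=
            mul_le_mul_of_nonneg_right h5 hOPTpos.le
          rw [zero_mul] at h6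
          linarith
        · have hT1v : T1 = 1 - c / s := max_eq_right h3
          have hkey : (1 - c / s) * OPT ≤ REW := by
            rw [hOPT', hREW', hA'']
            have e0 : c / s * m = c * s := by
              rw [← hss]
              field_simp
            have hcss : c * s₁ ≤ c * s := mul_le_mul_of_nonneg_left hs₁ hc0
            have h4 : (1 - c / s) * M ≤ m - c * s₁ := by
              have h5 : (1 - c / s) * M ≤ (1 - c / s) * m :=
                mul_le_mul_of_nonneg_left hMm h3
              have h6 : (1 - c / s) * m = m - c * s := by
                rw [sub_mul, one_mul, e0]
              linarith
            have h7 : (1 - c / s) * M * r₂ ≤ (m - c * s₁) * r₂ :=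
              mul_le_mul_of_nonneg_right h4 hr₂.le
            have h8 : (1 - c / s) * (n₁ * r₁) ≤ n₁ * r₁ :=
              mul_le_of_le_one_left (mul_nonneg hn₁0 hr1.le) (by linarith [div_nonneg hc0 hs0.le])
            have h9 : (1 - c / s) * (n₁ * r₁ + M * r₂)
                = (1 - c / s) * (n₁ * r₁) + (1 - c / s) * M * r₂ := by ring
            linarith
          calc min T1 T2 * OPT ≤ T1 * OPT :=
                mul_le_mul_of_nonneg_right hminT1 hOPTpos.le
            _ ≤ REW := by rw [hT1v]; exact hkey
  · -- capacity binds: REW ≥ m r₂ and OPT ≤ D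
    have hREW' : REW = A * r₂ + (m - A) * r₁ := by rw [hREW, min_eq_left hcase]
    have hREWge : m * r₂ ≤ REW := by
      have h1 : (m - A) * r₂ ≤ (m - A) * r₁ :=
        mul_le_mul_of_nonneg_left hr (by linarith)
      have h2 : A * r₂ + (m - A) * r₂ = m * r₂ := by ring
      rw [hREW']; linarith
    have hOPTD : OPT ≤ D := by
      have h1 : M * r₂ ≤ (m - n₁) * r₂ :=
        mul_le_mul_of_nonneg_right (min_le_right _ _) hr₂.le
      have h2 : n₁ * (r₁ - r₂) ≤ s * (r₁ - r₂) :=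
        mul_le_mul_of_nonneg_right hn₁ (by linarith)
      rw [hOPT', hDdef]; linarith [h1, h2]
    calc min T1 T2 * OPT ≤ T2 * OPT := mul_le_mul_of_nonneg_right hminT hOPTpos.le
      _ ≤ T2 * D := mul_le_mul_of_nonneg_left hOPTD hT20
      _ = m * r₂ := by rw [hT2def, div_mul_cancel₀ _ (ne_of_gt hD)]
      _ ≤ REW := hREWge
end

section
/- Let m ≥ 1 and 0 < r₂ ≤ r₁ be real numbers, and let n₁, n₂ be reals with 0 ≤ n₁ ≤ √m, n₂ ≥ 0 and n₁ + n₂ > 0. Then (min{m, n₂}·r₂ + min{n₁, (m − n₂)⁺}·r₁) / (min{m, n₁}·r₁ + min{n₂, (m − n₁)⁺}·r₂) ≥ 1 − √m·(r₁ − r₂)/(√m·r₁ + (m − √m)·r₂). -/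
/-!
Write `s = √m`; the right-hand side equals `m r₂ / (s r₁ + (m - s) r₂)`. If all `n₁ + n₂`
agents fit into the capacity, both policies accept everybody and the ratio is `1`. Otherwise
both fill the capacity `m` with agents worth at least `r₂`, so the protecting policy earns at
least `m r₂`, while the clairvoyant one earns `n₁ r₁ + (m - n₁) r₂ ≤ s r₁ + (m - s) r₂` because
`n₁ ≤ s`.
-/

/-- Reward of serving `a` agents of value `ra` first and then `b` agents of value `rb`
with capacity `m`. -/
def greedyReward (m a ra b rb : ℝ) : ℝ :=
  min m a * ra + min b (max (m - a) 0) * rb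

theorem min_add_min_max_sub {m a b : ℝ} (hb : 0 ≤ b) :
    min m a + min b (max (m - a) 0) = min m (a + b) := by
  rcases le_total m a with hma | ham
  · rw [min_eq_left hma, max_eq_right (by linarith), min_eq_right hb,
      min_eq_left (by linarith), add_zero]
  · rw [min_eq_right ham, max_eq_left (by linarith), ← min_add_add_left, add_sub_cancel,
      min_comm]

theorem greedyReward_of_add_le {m a ra b rb : ℝ} (hb : 0 ≤ b) (h : a + b ≤ m) :
    greedyReward m a ra b rb = a * ra + b * rb := by
  rw [greedyReward, min_eq_right (by linarith), max_eq_left (by linarith),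
    min_eq_left (by linarith)]

theorem greedyReward_of_le_of_le_add {m a ra b rb : ℝ} (ha : a ≤ m) (h : m ≤ a + b) :
    greedyReward m a ra b rb = a * ra + (m - a) * rb := by
  rw [greedyReward, min_eq_right ha, max_eq_left (by linarith), min_eq_right (by linarith)]

theorem mul_min_le_greedyReward {m a ra b rb r : ℝ} (hm : 0 ≤ m) (ha : 0 ≤ a) (hb : 0 ≤ b)
    (hra : r ≤ ra) (hrb : r ≤ rb) :
    r * min m (a + b) ≤ greedyReward m a ra b rb := by
  rw [← min_add_min_max_sub hb, greedyReward, mul_add, mul_comm r, mul_comm r]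
  gcongr

/-- Part 2 of the proof of the paper's Lemma 2 (region `R₁`, `n₁ ≤ √m`): the
reward of the policy protecting type 2 (accept all type-2 agents up to
capacity `m`, then type-1 agents with the remaining resource) over the optimal
clairvoyant reward is at least `1 - √m(r₁-r₂)/(√m r₁ + (m-√m) r₂)`. -/
theorem region_one_bad_event (m r₁ r₂ n₁ n₂ : ℝ)
    (hm : 1 ≤ m) (hr₂ : 0 < r₂) (hr : r₂ ≤ r₁)
    (hn₁0 : 0 ≤ n₁) (hn₁ : n₁ ≤ Real.sqrt m) (hn₂ : 0 ≤ n₂) (hsum : 0 < n₁ + n₂) :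
    (min m n₂ * r₂ + min n₁ (max (m - n₂) 0) * r₁) /
        (min m n₁ * r₁ + min n₂ (max (m - n₁) 0) * r₂)
      ≥ 1 - Real.sqrt m * (r₁ - r₂) / (Real.sqrt m * r₁ + (m - Real.sqrt m) * r₂) := by
  change greedyReward m n₂ r₂ n₁ r₁ / greedyReward m n₁ r₁ n₂ r₂ ≥ _
  set s := Real.sqrt m
  have hsm : s ≤ m := Real.sqrt_le_self_iff.2 (Or.inr hm)
  have hgap : n₁ * (r₁ - r₂) ≤ s * (r₁ - r₂) := mul_le_mul_of_nonneg_right hn₁ (sub_nonneg.2 hr)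
  have hmr₂ : 0 < m * r₂ := by positivity
  have hD : m * r₂ ≤ s * r₁ + (m - s) * r₂ := by nlinarith
  rw [one_sub_div (by linarith), show s * r₁ + (m - s) * r₂ - s * (r₁ - r₂) = m * r₂ by ring,
    ge_iff_le]
  rcases le_or_gt (n₁ + n₂) m with hfit | hfull
  · have hall : 0 < n₁ * r₁ + n₂ * r₂ := by nlinarith
    rw [greedyReward_of_add_le hn₁0 (by linarith), greedyReward_of_add_le hn₂ hfit,
      add_comm (n₂ * r₂), div_self hall.ne']
    exact div_le_one_of_le₀ hD (by linarith)
  · have hcap : min m (n₁ + n₂) = m := min_eq_left hfull.le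
    have hprot : m * r₂ ≤ greedyReward m n₂ r₂ n₁ r₁ := by
      simpa [add_comm n₂, hcap, mul_comm] using
        mul_min_le_greedyReward (m := m) (by linarith) hn₂ hn₁0 le_rfl hr
    have hopt : m * r₂ ≤ greedyReward m n₁ r₁ n₂ r₂ := by
      simpa [hcap, mul_comm] using
        mul_min_le_greedyReward (m := m) (by linarith) hn₁0 hn₂ hr le_rfl
    have hoptD : greedyReward m n₁ r₁ n₂ r₂ ≤ s * r₁ + (m - s) * r₂ := by
      rw [greedyReward_of_le_of_le_add (hn₁.trans hsm) hfull.le]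
      linarith
    calc m * r₂ / (s * r₁ + (m - s) * r₂)
        ≤ m * r₂ / greedyReward m n₁ r₁ n₂ r₂ :=
          div_le_div_of_nonneg_left hmr₂.le (by linarith) hoptD
      _ ≤ greedyReward m n₂ r₂ n₁ r₁ / greedyReward m n₁ r₁ n₂ r₂ := by gcongr; linarith
end

section
/- Let m ≥ 1 and 0 < r₂ ≤ r₁ be real numbers, and let n₁, n₂ be reals with n₁ ≥ 0, 0 ≤ n₂ ≤ √m and n₁ + n₂ > 0. Then (min{m, n₂}·r₂ + min{n₁, (m − n₂)⁺}·r₁) / (min{m, n₁}·r₁ + min{n₂, (m − n₁)⁺}·r₂) ≥ 1 − 1/√m. -/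
/-- Part 1 of the proof of the paper's Lemma 3 (region `R₂`, `n₂ ≤ √m`): the
reward of the policy that accepts all type-2 agents and then as many type-1
agents as possible, over the optimal clairvoyant reward, is at least
`1 - 1/√m`. -/
theorem region_two_bad_event (m r₁ r₂ n₁ n₂ : ℝ)
    (hm : 1 ≤ m) (hr₂ : 0 < r₂) (hr : r₂ ≤ r₁)
    (hn₁ : 0 ≤ n₁) (hn₂0 : 0 ≤ n₂) (hn₂ : n₂ ≤ Real.sqrt m) (hsum : 0 < n₁ + n₂) :
    (min m n₂ * r₂ + min n₁ (max (m - n₂) 0) * r₁) /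
        (min m n₁ * r₁ + min n₂ (max (m - n₁) 0) * r₂)
      ≥ 1 - 1 / Real.sqrt m := by
  set s := Real.sqrt m with hs_def
  have hs1 : 1 ≤ s := by
    rw [hs_def, show (1:ℝ) = Real.sqrt 1 by simp]
    exact Real.sqrt_le_sqrt hm
  have hs0 : (0:ℝ) < s := lt_of_lt_of_le one_pos hs1
  have hssq : s * s = m := Real.mul_self_sqrt (by linarith)
  have hsm : s ≤ m := by nlinarith
  have hn₂m : n₂ ≤ m := hn₂.trans hsm
  have hr₁ : 0 < r₁ := lt_of_lt_of_le hr₂ hr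
  have hfrac : 0 < 1 / s := by positivity
  have hfrac1 : 1 / s ≤ 1 := by
    rw [div_le_one hs0]; exact hs1
  have hDpos : 0 < min m n₁ * r₁ + min n₂ (max (m - n₁) 0) * r₂ := by
    rcases lt_or_ge 0 n₁ with h | h
    · have h1 : 0 < min m n₁ := lt_min (by linarith) h
      have h2 : 0 ≤ min n₂ (max (m - n₁) 0) * r₂ :=
        mul_nonneg (le_min hn₂0 (le_max_right _ _)) hr₂.le
      nlinarith
    · have hn1 : n₁ = 0 := le_antisymm h hn₁
      have hn2pos : 0 < n₂ := by nlinarith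
      have h3 : min n₂ (max (m - n₁) 0) = n₂ := by
        rw [hn1]; simp only [sub_zero]
        exact min_eq_left (le_trans hn₂m (le_max_left _ _))
      have h4 : 0 ≤ min m n₁ * r₁ := mul_nonneg (le_min (by linarith) hn₁) hr₁.le
      rw [h3]; nlinarith
  rw [ge_iff_le, le_div_iff₀ hDpos]
  have hmin1 : min m n₂ = n₂ := min_eq_right hn₂m
  have hmax1 : max (m - n₂) 0 = m - n₂ := max_eq_left (by linarith)
  rcases le_or_gt n₁ (m - n₂) with hc | hc
  · have h1 : min n₁ (max (m - n₂) 0) = n₁ := by rw [hmax1]; exact min_eq_left hc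
    have h2 : min m n₁ = n₁ := min_eq_right (by linarith)
    have h3 : max (m - n₁) 0 = m - n₁ := max_eq_left (by linarith)
    have h4 : min n₂ (m - n₁) = n₂ := min_eq_left (by linarith)
    rw [hmin1, h1, h2, h3, h4]
    have hD0 : 0 ≤ n₂ * r₂ + n₁ * r₁ := by positivity
    nlinarith
  · -- case n₁ > m - n₂
    have h1 : min n₁ (max (m - n₂) 0) = m - n₂ := by
      rw [hmax1]; exact min_eq_right hc.le
    have hDle : min m n₁ * r₁ + min n₂ (max (m - n₁) 0) * r₂ ≤ m * r₁ := by
      rcases le_or_gt m n₁ with h | h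
      · have ha : min m n₁ = m := min_eq_left h
        have hb : max (m - n₁) 0 = 0 := max_eq_right (by linarith)
        have hcmin : min n₂ 0 = 0 := min_eq_right hn₂0
        rw [ha, hb, hcmin]; linarith
      · have ha : min m n₁ = n₁ := min_eq_right h.le
        have hb : max (m - n₁) 0 = m - n₁ := max_eq_left (by linarith)
        have hcmin : min n₂ (m - n₁) ≤ m - n₁ := min_le_right _ _
        have hcmin' : min n₂ (m - n₁) * r₂ ≤ (m - n₁) * r₂ :=
          mul_le_mul_of_nonneg_right hcmin hr₂.le
        rw [ha, hb]
        nlinarith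
    rw [hmin1, h1]
    have key : (1 - 1 / s) * m = m - s := by
      field_simp
      nlinarith
    have step1 : (1 - 1 / s) * (min m n₁ * r₁ + min n₂ (max (m - n₁) 0) * r₂)
        ≤ (1 - 1 / s) * (m * r₁) :=
      mul_le_mul_of_nonneg_left hDle (by linarith)
    have step2 : (1 - 1 / s) * (m * r₁) = (m - s) * r₁ := by
      rw [← mul_assoc, key]
    have step3 : (m - s) * r₁ ≤ (m - n₂) * r₁ :=
      mul_le_mul_of_nonneg_right (by linarith) hr₁.le
    have step4 : (m - n₂) * r₁ ≤ n₂ * r₂ + (m - n₂) * r₁ := by nlinarith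
    linarith
end

section
/- Let m > 0 and 0 < r₂ ≤ r₁ be real numbers, let c ≥ 0 be real, and let n₁, n₂ be reals with n₁, n₂ ≥ 0 and n₁ + n₂ > 0. Then (n₂·r₂ + min{n₁, (m − c)⁺}·r₁) / (min{m, n₁}·r₁ + min{n₂, (m − n₁)⁺}·r₂) ≥ min{1, (n₂·r₂ + (m − c)⁺·r₁)/(m·r₁)}. -/
/-- Branch of the paper's Lemma 12 (region `R₃`, bad event, event `E₄ᶜ`): when
the algorithm over-protects type 2 with protection level `c` exceeding the
number `n₂` of type-2 arrivals, it accepts all `n₂` type-2 agents and at most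
`(m - c)⁺` type-1 agents, achieving at least
`min{1, (n₂ r₂ + (m - c)⁺ r₁)/(m r₁)}` of the optimal clairvoyant reward. -/
theorem region_three_E4c (m r₁ r₂ c n₁ n₂ : ℝ)
    (hm : 0 < m) (hr₂ : 0 < r₂) (hr : r₂ ≤ r₁) (hc : 0 ≤ c)
    (hn₁ : 0 ≤ n₁) (hn₂ : 0 ≤ n₂) (hsum : 0 < n₁ + n₂) :
    (n₂ * r₂ + min n₁ (max (m - c) 0) * r₁) /
        (min m n₁ * r₁ + min n₂ (max (m - n₁) 0) * r₂)
      ≥ min 1 ((n₂ * r₂ + max (m - c) 0 * r₁) / (m * r₁)) := by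
  have hr₁ : 0 < r₁ := lt_of_lt_of_le hr₂ hr
  set D := min m n₁ * r₁ + min n₂ (max (m - n₁) 0) * r₂ with hDdef
  have hD0 : 0 < D := by
    rcases lt_or_ge 0 n₁ with h | h
    · have h1 : 0 < min m n₁ * r₁ := mul_pos (lt_min hm h) hr₁
      have h2 : 0 ≤ min n₂ (max (m - n₁) 0) * r₂ :=
        mul_nonneg (le_min hn₂ (le_max_right _ _)) hr₂.le
      rw [hDdef]; linarith
    · have hn₁0 : n₁ = 0 := le_antisymm h hn₁
      have h2 : 0 < min n₂ (max (m - n₁) 0) * r₂ := by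
        apply mul_pos _ hr₂
        apply lt_min (by linarith)
        apply lt_max_of_lt_left; linarith
      have h1 : 0 ≤ min m n₁ * r₁ := mul_nonneg (le_min hm.le hn₁) hr₁.le
      rw [hDdef]; linarith
  have hDle : D ≤ m * r₁ := by
    have h2 : min n₂ (max (m - n₁) 0) * r₂ ≤ max (m - n₁) 0 * r₂ :=
      mul_le_mul_of_nonneg_right (min_le_right _ _) hr₂.le
    have h4 : max (m - n₁) 0 * r₂ ≤ max (m - n₁) 0 * r₁ :=
      mul_le_mul_of_nonneg_left hr (le_max_right _ _)
    have h3 : min m n₁ + max (m - n₁) 0 = m := by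
      rcases le_total m n₁ with h | h
      · rw [min_eq_left h, max_eq_right (by linarith)]; ring
      · rw [min_eq_right h, max_eq_left (by linarith)]; ring
    have h1 : min m n₁ * r₁ + max (m - n₁) 0 * r₁ = m * r₁ := by
      rw [← add_mul, h3]
    rw [hDdef]; linarith
  rcases min_cases n₁ (max (m - c) 0) with ⟨he, _⟩ | ⟨he, _⟩
  · rw [he]
    have hDN : D ≤ n₂ * r₂ + n₁ * r₁ := by
      have h1 : min m n₁ * r₁ ≤ n₁ * r₁ :=
        mul_le_mul_of_nonneg_right (min_le_right _ _) hr₁.le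
      have h2 : min n₂ (max (m - n₁) 0) * r₂ ≤ n₂ * r₂ :=
        mul_le_mul_of_nonneg_right (min_le_left _ _) hr₂.le
      rw [hDdef]; linarith
    have h1 : (1:ℝ) ≤ (n₂ * r₂ + n₁ * r₁) / D := (le_div_iff₀ hD0).2 (by linarith)
    exact le_trans (min_le_left _ _) h1
  · rw [he]
    have hN0 : 0 ≤ n₂ * r₂ + max (m - c) 0 * r₁ := by positivity
    have h1 : (n₂ * r₂ + max (m - c) 0 * r₁) / (m * r₁)
        ≤ (n₂ * r₂ + max (m - c) 0 * r₁) / D := by gcongr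
    exact le_trans (min_le_right _ _) h1
end

section
/- Let (Ω, μ) be a probability space, let Y : Ω → ℝ be an integrable measurable function, and let a ≥ 0 be real. If μ({ω : 0 ≤ Y ω ∧ Y ω ≤ a}) > 0, then (∫_{{0 ≤ Y ≤ a}} Y dμ) / (μ{ω : 0 ≤ Y ω ≤ a}).toReal ≤ (∫_{{Y ≥ 0}} Y dμ) / (μ{ω : Y ω ≥ 0}).toReal. -/
/-!
Split `{0 ≤ Y}` into `{0 ≤ Y ≤ a}` and `{a < Y}`. The average of `Y` over the first piece is at
most `a` and its average over the second is at least `a`, so merging the two pieces can only raise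
the average above that of the first one (a mediant inequality).
-/

open MeasureTheory

theorem div_le_add_div_add_of_le_mul {x y m n c : ℝ} (hm : 0 < m) (hn : 0 ≤ n)
    (hx : x ≤ c * m) (hy : c * n ≤ y) : x / m ≤ (x + y) / (m + n) := by
  rw [div_le_div_iff₀ hm (by linarith)]
  nlinarith [mul_le_mul_of_nonneg_right hx hn, mul_le_mul_of_nonneg_left hy hm.le]

namespace MeasureTheory

variable {Ω : Type*} [MeasurableSpace Ω] {μ : Measure Ω} {f : Ω → ℝ} {s u : Set Ω} {c : ℝ}

theorem setIntegral_le_of_le_const₀ (hs : NullMeasurableSet s μ) (hμs : μ s ≠ ⊤)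
    (hf : IntegrableOn f s μ) (hc : ∀ x ∈ s, f x ≤ c) : ∫ x in s, f x ∂μ ≤ c * μ.real s := by
  simpa [mul_comm] using setIntegral_mono_on₀ hf (integrableOn_const hμs) hs hc

theorem setIntegral_ge_of_const_le₀ (hs : NullMeasurableSet s μ) (hμs : μ s ≠ ⊤)
    (hf : IntegrableOn f s μ) (hc : ∀ x ∈ s, c ≤ f x) : c * μ.real s ≤ ∫ x in s, f x ∂μ := by
  simpa [mul_comm] using setIntegral_mono_on₀ (integrableOn_const hμs) hf hs hc

theorem setIntegral_div_measureReal_le_of_subset (hsu : s ⊆ u) (hs : NullMeasurableSet s μ)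
    (hu : NullMeasurableSet u μ) (hμu : μ u ≠ ⊤) (hμs : μ s ≠ 0) (hf : IntegrableOn f u μ)
    (hs_le : ∀ x ∈ s, f x ≤ c) (hle_diff : ∀ x ∈ u \ s, c ≤ f x) :
    (∫ x in s, f x ∂μ) / μ.real s ≤ (∫ x in u, f x ∂μ) / μ.real u := by
  have hd : NullMeasurableSet (u \ s) μ := hu.diff hs
  have hdisj : AEDisjoint μ s (u \ s) := Set.disjoint_sdiff_right.aedisjoint
  have hμs' : μ s ≠ ⊤ := measure_ne_top_of_subset hsu hμu
  have hμd : μ (u \ s) ≠ ⊤ := measure_ne_top_of_subset Set.sdiff_subset hμu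
  rw [← Set.union_sdiff_cancel hsu, setIntegral_union₀ hdisj hd (hf.mono_set hsu)
    (hf.mono_set Set.sdiff_subset), measureReal_union₀ hd hdisj hμs' hμd]
  exact div_le_add_div_add_of_le_mul (ENNReal.toReal_pos hμs hμs') measureReal_nonneg
    (setIntegral_le_of_le_const₀ hs hμs' (hf.mono_set hsu) hs_le)
    (setIntegral_ge_of_const_le₀ hd hμd (hf.mono_set Set.sdiff_subset) hle_diff)

end MeasureTheory

theorem truncated_cond_exp_le_general {Ω : Type*} [MeasurableSpace Ω]
    (μ : Measure Ω) [IsProbabilityMeasure μ]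
    (Y : Ω → ℝ) (hint : Integrable Y μ)
    (a : ℝ)
    (hpos : 0 < μ {ω | 0 ≤ Y ω ∧ Y ω ≤ a}) :
    (∫ ω in {ω | 0 ≤ Y ω ∧ Y ω ≤ a}, Y ω ∂μ) / (μ {ω | 0 ≤ Y ω ∧ Y ω ≤ a}).toReal
      ≤ (∫ ω in {ω | 0 ≤ Y ω}, Y ω ∂μ) / (μ {ω | 0 ≤ Y ω}).toReal := by
  have hY := hint.aemeasurable
  have hnonneg : NullMeasurableSet {ω | 0 ≤ Y ω} μ := nullMeasurableSet_le aemeasurable_const hY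
  refine setIntegral_div_measureReal_le_of_subset (c := a) (fun ω hω => hω.1)
    (hnonneg.inter (nullMeasurableSet_le hY aemeasurable_const)) hnonneg (measure_ne_top _ _)
    hpos.ne' hint.integrableOn (fun ω hω => hω.2) ?_
  rintro ω ⟨hω₀, hω⟩
  exact (not_le.1 fun h => hω ⟨hω₀, h⟩).le

/-- Conditional-expectation comparison used in the proofs of the paper's
Lemmas 5 and 9: for an integrable random variable `Y` on a probability space,
`E[Y | 0 ≤ Y ≤ a] ≤ E[Y | Y ≥ 0]` whenever the event `{0 ≤ Y ≤ a}` has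
positive probability. -/
theorem truncated_cond_exp_le {Ω : Type*} [MeasurableSpace Ω]
    (μ : Measure Ω) [IsProbabilityMeasure μ]
    (Y : Ω → ℝ) (hmeas : Measurable Y) (hint : Integrable Y μ)
    (a : ℝ) (ha : 0 ≤ a)
    (hpos : 0 < μ {ω | 0 ≤ Y ω ∧ Y ω ≤ a}) :
    (∫ ω in {ω | 0 ≤ Y ω ∧ Y ω ≤ a}, Y ω ∂μ) / (μ {ω | 0 ≤ Y ω ∧ Y ω ≤ a}).toReal
      ≤ (∫ ω in {ω | 0 ≤ Y ω}, Y ω ∂μ) / (μ {ω | 0 ≤ Y ω}).toReal :=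
  truncated_cond_exp_le_general μ Y hint a hpos
end

section
/- Let r₁, r₂ be real numbers with 0 < r₂ ≤ r₁ and set α = r₂/r₁. Let m > 0 and t > 0 be real. Then for every real x with 0 ≤ x ≤ m: min{ 1 − x/m , ((m − x)·r₂ + x·r₁)/(min{t, m}·r₁ + (m − t)⁺·r₂) + 1/t² } ≤ m/(m + min{t, m}·(1 − α)) + 1/t². -/
/-- Key optimization step in the proof of the paper's Theorem 4: for every
protection choice `x ∈ [0, m]`, the minimum of the two competitive ratios (on
the all-type-2 instance and on the instance with `t` type-1 agents) is at most
`m/(m + min{t,m}(1 - α)) + 1/t²`, where `α = r₂/r₁`. -/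
theorem nonasymptotic_upper_bound_step (r₁ r₂ : ℝ) (hr₂ : 0 < r₂) (hr : r₂ ≤ r₁)
    (m t : ℝ) (hm : 0 < m) (ht : 0 < t)
    (x : ℝ) (hx0 : 0 ≤ x) (hxm : x ≤ m) :
    min (1 - x / m)
        (((m - x) * r₂ + x * r₁) / (min t m * r₁ + max (m - t) 0 * r₂) + 1 / t ^ 2)
      ≤ m / (m + min t m * (1 - r₂ / r₁)) + 1 / t ^ 2 := by
  have hr₁ : 0 < r₁ := lt_of_lt_of_le hr₂ hr
  set s := min t m with hs
  have hs0 : 0 < s := lt_min ht hm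
  have hsm : s ≤ m := min_le_right _ _
  have hmax : max (m - t) 0 = m - s := by
    rcases le_total t m with h | h
    · rw [hs, min_eq_left h, max_eq_left (by linarith)]
    · rw [hs, min_eq_right h, max_eq_right (by linarith)]; ring
  have hD : 0 < s * r₁ + (m - s) * r₂ := by nlinarith
  have hE : 0 < m * r₁ + s * (r₁ - r₂) := by nlinarith
  have ht2 : (0:ℝ) ≤ 1 / t ^ 2 := by positivity
  have hRHS : m / (m + s * (1 - r₂ / r₁)) = m * r₁ / (m * r₁ + s * (r₁ - r₂)) := by
    rw [div_eq_div_iff (by nlinarith [mul_nonneg hs0.le (sub_nonneg.2 ((div_le_one hr₁).2 hr))] : (0:ℝ) < m + s * (1 - r₂ / r₁)).ne' hE.ne']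
    field_simp
  rw [hRHS, hmax]
  rcases le_or_gt (1 - x / m) (m * r₁ / (m * r₁ + s * (r₁ - r₂))) with h | h
  · exact le_trans (min_le_left _ _) (le_trans h (le_add_of_nonneg_right ht2))
  · refine le_trans (min_le_right _ _) ?_
    have hx' : m * r₁ * m < (m - x) * (m * r₁ + s * (r₁ - r₂)) := by
      have h1 : 1 - x / m = (m - x) / m := by field_simp
      rw [h1] at h
      exact (div_lt_div_iff₀ hE hm).mp h
    have key : ((m - x) * r₂ + x * r₁) / (s * r₁ + (m - s) * r₂)
        ≤ m * r₁ / (m * r₁ + s * (r₁ - r₂)) := by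
      rw [div_le_div_iff₀ hD hE]
      nlinarith [mul_nonneg (sub_nonneg.2 hr)
        (sub_nonneg.2 hx'.le)]
    linarith
end
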